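/- Let φ = (1+√5)/2. For real numbers p, q, r, set P = φ²p² − q², Q = φ²q² − r², R = φ²r² − p², α = P²Q + Q²R + R²P, β = PQ² + QR² + RP². Then one has the identity 64φ³·p²q²r² = 22PQR + P³ + Q³ + R³ + (6+φ)α + (7−φ)β, valid for all real p, q, r. -/
import Mathlib


/-- The golden ratio. -/
noncomputable def φ : ℝ := (1 + Real.sqrt 5) / 2

lemma phi_sq : φ ^ 2 = φ + 1 := by
  have h5 : Real.sqrt 5 ^ 2 = 5 := Real.sq_sqrt (by norm_num)
  unfold φ
  nlinarith [h5]

/-- With `P = φ²p² − q²`, `Q = φ²q² − r²`, `R = φ²r² − p²`, `α = P²Q + Q²R + R²P` and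
`β = PQ² + QR² + RP²`, one has `64φ³·p²q²r² = 22PQR + P³ + Q³ + R³ + (6+φ)α + (7−φ)β`. -/
theorem stmt11 (p q r : ℝ) :
    let P := φ ^ 2 * p ^ 2 - q ^ 2
    let Q := φ ^ 2 * q ^ 2 - r ^ 2
    let R := φ ^ 2 * r ^ 2 - p ^ 2
    let α := P ^ 2 * Q + Q ^ 2 * R + R ^ 2 * P
    let β := P * Q ^ 2 + Q * R ^ 2 + R * P ^ 2
    64 * φ ^ 3 * (p ^ 2 * q ^ 2 * r ^ 2) =
      22 * (P * Q * R) + P ^ 3 + Q ^ 3 + R ^ 3 + (6 + φ) * α + (7 - φ) * β := by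
  intro P Q R α β
  simp only [P, Q, R, α, β]
  linear_combination ((-1)*r^6 + (-7)*q^2*r^4 + (-6)*q^4*r^2 + (-1)*q^6 + (-6)*p^2*r^4 + (-22)*p^2*q^2*r^2 + (-7)*p^2*q^4 + (-7)*p^4*r^2 + (-6)*p^4*q^2 + (-1)*p^6 + (1)*φ^1*r^6 + (8)*φ^1*q^2*r^4 + (5)*φ^1*q^4*r^2 + (1)*φ^1*q^6 + (5)*φ^1*p^2*r^4 + (22)*φ^1*p^2*q^2*r^2 + (8)*φ^1*p^2*q^4 + (8)*φ^1*p^4*r^2 + (5)*φ^1*p^4*q^2 + (1)*φ^1*p^6 + (4)*φ^2*r^6 + (10)*φ^2*q^2*r^4 + (10)*φ^2*q^4*r^2 + (4)*φ^2*q^6 + (10)*φ^2*p^2*r^4 + (-8)*φ^2*p^2*q^2*r^2 + (10)*φ^2*p^2*q^4 + (10)*φ^2*p^4*r^2 + (10)*φ^2*p^4*q^2 + (4)*φ^2*p^6 + (-2)*φ^3*r^6 + (-2)*φ^3*q^2*r^4 + (-8)*φ^3*q^4*r^2 + (-2)*φ^3*q^6 + (-8)*φ^3*p^2*r^4 + (-28)*φ^3*p^2*q^2*r^2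 + (-2)*φ^3*p^2*q^4 + (-2)*φ^3*p^4*r^2 + (-8)*φ^3*p^4*q^2 + (-2)*φ^3*p^6 + (-1)*φ^4*r^6 + (-6)*φ^4*q^2*r^4 + (-7)*φ^4*q^4*r^2 + (-1)*φ^4*q^6 + (-7)*φ^4*p^2*r^4 + (-22)*φ^4*p^2*q^2*r^2 + (-6)*φ^4*p^2*q^4 + (-6)*φ^4*p^4*r^2 + (-7)*φ^4*p^4*q^2 + (-1)*φ^4*p^6 + (1)*φ^5*q^2*r^4 + (-1)*φ^5*q^4*r^2 + (-1)*φ^5*p^2*r^4 + (1)*φ^5*p^2*q^4 + (1)*φ^5*p^4*r^2 + (-1)*φ^5*p^4*q^2) * phi_sq
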